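/- (Global downward closure property.) If a nonempty itemset X ⊆ I satisfies TWU(X) < LMU, then X is not an HUI, and no superset of X is an HUI or an HTWUI: every itemset Y with X ⊆ Y ⊆ I satisfies u(Y) < MIU(Y) and TWU(Y) < MIU(Y). -/

import Mathlib

open Finset

variable {ι τ : Type*}

/-- Utility of item `i` in transaction `t`: quantity times unit profit. -/
def itemU (pr : ι → ℝ) (q : ι → τ → ℕ) (i : ι) (t : τ) : ℝ :=
  (q i t : ℝ) * pr i

/-- Utility of itemset `X` in transaction `t`. -/
def setU (pr : ι → ℝ) (q : ι → τ → ℕ) (X : Finset ι) (t : τ) : ℝ :=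
  ∑ i ∈ X, itemU pr q i t

/-- Transaction utility of transaction `t` (with item set `Tr t`). -/
def tu (pr : ι → ℝ) (q : ι → τ → ℕ) (Tr : τ → Finset ι) (t : τ) : ℝ :=
  ∑ i ∈ Tr t, itemU pr q i t

/-- Transaction-weighted utility of itemset `X` in database `D`. -/
def TWU [DecidableEq ι] (pr : ι → ℝ) (q : ι → τ → ℕ) (Tr : τ → Finset ι)
    (D : Finset τ) (X : Finset ι) : ℝ :=
  ∑ t ∈ D.filter (fun t => X ⊆ Tr t), tu pr q Tr t

/-- Utility of itemset `X` in database `D`. -/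
def dbU [DecidableEq ι] (pr : ι → ℝ) (q : ι → τ → ℕ) (Tr : τ → Finset ι)
    (D : Finset τ) (X : Finset ι) : ℝ :=
  ∑ t ∈ D.filter (fun t => X ⊆ Tr t), setU pr q X t

/-- Minimum itemset utility of a nonempty itemset `X`. -/
def MIU (mu : ι → ℝ) (X : Finset ι) (hX : X.Nonempty) : ℝ :=
  X.inf' hX mu

/-- Remaining utility of itemset `X` in transaction `t`: total utility of the items of
`Tr t` that come strictly after every item of `X`. -/
def ru [LinearOrder ι] (pr : ι → ℝ) (q : ι → τ → ℕ) (Tr : τ → Finset ι)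
    (X : Finset ι) (t : τ) : ℝ :=
  ∑ i ∈ (Tr t).filter (fun i => ∀ x ∈ X, x < i), itemU pr q i t

/-- Sum of the remaining utilities of itemset `X` over the database `D` (`X.RU`). -/
def dbRU [LinearOrder ι] (pr : ι → ℝ) (q : ι → τ → ℕ) (Tr : τ → Finset ι)
    (D : Finset τ) (X : Finset ι) : ℝ :=
  ∑ t ∈ D.filter (fun t => X ⊆ Tr t), ru pr q Tr X t

section Monotonicity

variable {pr : ι → ℝ} (q : ι → τ → ℕ) (Tr : τ → Finset ι) (D : Finset τ)

theorem itemU_nonneg {i : ι} (hpr : 0 ≤ pr i) (t : τ) : 0 ≤ itemU pr q i t :=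
  mul_nonneg (Nat.cast_nonneg _) hpr

theorem tu_nonneg (hpr : ∀ i, 0 ≤ pr i) (t : τ) : 0 ≤ tu pr q Tr t :=
  sum_nonneg fun i _ => itemU_nonneg q (hpr i) t

theorem setU_le_tu (hpr : ∀ i, 0 ≤ pr i) {X : Finset ι} {t : τ} (hX : X ⊆ Tr t) :
    setU pr q X t ≤ tu pr q Tr t :=
  sum_le_sum_of_subset_of_nonneg hX fun i _ _ => itemU_nonneg q (hpr i) t

theorem dbU_le_TWU [DecidableEq ι] (hpr : ∀ i, 0 ≤ pr i) (X : Finset ι) :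
    dbU pr q Tr D X ≤ TWU pr q Tr D X :=
  sum_le_sum fun _ ht => setU_le_tu q Tr hpr (mem_filter.1 ht).2

theorem TWU_antitone [DecidableEq ι] (hpr : ∀ i, 0 ≤ pr i) : Antitone (TWU pr q Tr D) := by
  intro X Y hXY
  refine sum_le_sum_of_subset_of_nonneg ?_ fun t _ _ => tu_nonneg q Tr hpr t
  exact monotone_filter_right D fun _ _ hYt => hXY.trans hYt

end Monotonicity

theorem MIU_le_of_subset (mu : ι → ℝ) {Y I : Finset ι} (hY : Y.Nonempty) (hI : I.Nonempty)
    (hYI : Y ⊆ I) : MIU mu I hI ≤ MIU mu Y hY :=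
  inf'_mono mu hYI hY

theorem global_downward_closure_general [DecidableEq ι] (I : Finset ι) (hI : I.Nonempty)
    (pr mu : ι → ℝ) (hpr : ∀ i, 0 ≤ pr i)
    (D : Finset τ) (Tr : τ → Finset ι) (q : ι → τ → ℕ)
    (X : Finset ι) (hX : X.Nonempty)
    (hlow : TWU pr q Tr D X < MIU mu I hI) :
    ∀ (Y : Finset ι) (hXY : X ⊆ Y), Y ⊆ I →
      dbU pr q Tr D Y < MIU mu Y (hX.mono hXY) ∧
        TWU pr q Tr D Y < MIU mu Y (hX.mono hXY) := by
  intro Y hXY hYI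
  have hTWU : TWU pr q Tr D Y < MIU mu Y (hX.mono hXY) :=
    calc TWU pr q Tr D Y ≤ TWU pr q Tr D X := TWU_antitone q Tr D hpr hXY
      _ < MIU mu I hI := hlow
      _ ≤ MIU mu Y (hX.mono hXY) := MIU_le_of_subset mu _ hI hYI
  exact ⟨(dbU_le_TWU q Tr D hpr Y).trans_lt hTWU, hTWU⟩

/-- global downward closure property. If `TWU(X) < LMU`, then `X` is not an
HUI and every superset `Y` of `X` (within `I`) is neither an HUI nor an HTWUI. -/
theorem global_downward_closure [DecidableEq ι] (I : Finset ι) (hI : I.Nonempty)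
    (pr mu : ι → ℝ) (hpr : ∀ i, 0 ≤ pr i) (hmu : ∀ i, 0 < mu i)
    (D : Finset τ) (Tr : τ → Finset ι) (q : ι → τ → ℕ)
    (hq : ∀ t ∈ D, ∀ i ∈ Tr t, 0 < q i t) (hTr : ∀ t ∈ D, Tr t ⊆ I)
    (X : Finset ι) (hX : X.Nonempty) (hXI : X ⊆ I)
    (hlow : TWU pr q Tr D X < MIU mu I hI) :
    ∀ (Y : Finset ι) (hXY : X ⊆ Y), Y ⊆ I →
      dbU pr q Tr D Y < MIU mu Y (hX.mono hXY) ∧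
        TWU pr q Tr D Y < MIU mu Y (hX.mono hXY) :=
  global_downward_closure_general I hI pr mu hpr D Tr q X hX hlow
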